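/- Let p be an odd prime and let m ≥ 2 be an integer with m ≢ 0 (mod p−1). Then every nonzero rational coefficient of the polynomial Q_m ∈ ℚ[c_1, c_2, c_3, …] has nonnegative p-adic valuation; that is, p does not divide the denominator of B̂_m/m. -/

import Mathlib

open Nat MvPolynomial

noncomputable section

/-- weight of a partition given as multiplicity function -/
def pWeight (U : ℕ →₀ ℕ) : ℕ := U.sum fun j m => j * m

/-- degree of a partition -/
def pDegree (U : ℕ →₀ ℕ) : ℕ := U.sum fun _ m => m

/-- γ_U = ∏_j (j+1)^{U j} (U j)! -/
def pGamma (U : ℕ →₀ ℕ) : ℕ := U.prod fun j m => (j + 1) ^ m * m !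

/-- τ_U = (-1)^{d(U)-1} (w(U)+d(U)-2)! / γ_U -/
def pTau (U : ℕ →₀ ℕ) : ℚ :=
  (-1) ^ (pDegree U - 1) * ((pWeight U + pDegree U - 2)! : ℚ) / (pGamma U : ℚ)

/-- Q n = B̂_n / n, the Schur function expression of the universal Bernoulli numbers -/
def Q (n : ℕ) : MvPolynomial ℕ ℚ :=
  ∑ᶠ U ∈ {U : ℕ →₀ ℕ | U 0 = 0 ∧ pWeight U = n}, monomial U (pTau U)

/-- A polynomial over ℚ is ≡ 0 mod p^M iff every nonzero coefficient has
p-adic valuation at least M. -/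
def CongZeroModPpow (p : ℕ) (M : ℕ) (P : MvPolynomial ℕ ℚ) : Prop :=
  ∀ m : ℕ →₀ ℕ, P.coeff m ≠ 0 → (M : ℤ) ≤ padicValRat p (P.coeff m)

/-! The coefficient of `c^U` in `Q m` is `τ_U = ±(N - 2)! / γ_U` with `N = ∑ j, (j + 1) U_j`,
so it suffices that `v_p(γ_U) ≤ v_p((N - 2)!)`. Each factor `(j + 1)^{U_j} U_j!` of `γ_U` divides
`((j + 1) U_j)!`, and `v_p` of factorials is superadditive. Since `p - 1 ∤ m`, some part `j` of `U`
has `j + 1 ≠ p`, and for `a = j + 1 ≠ p`, `k = U_j ≥ 1` the sharper bound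
`v_p(a^k k!) ≤ v_p((ak - 2)!)` absorbs the `- 2`. For `p ∤ a` this is monotonicity of `v_p(n!)`;
for `a = pb` with `b ≥ 2`, Legendre's `v_p((pn)!) = n + v_p(n!)` leaves a surplus of `(b - 1)k`,
which covers `v_p(ak) = 1 + v_p(b) + v_p(k)` because `p ≥ 3`. -/

open Finset

theorem pow_mul_factorial_dvd_factorial_mul {a : ℕ} (ha : a ≠ 0) (k : ℕ) :
    a ^ k * k ! ∣ (a * k)! := by
  induction k with
  | zero => simp
  | succ k ih =>
    have hak : a * k ≤ a * (k + 1) - 1 := by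
      have : 1 ≤ a := Nat.one_le_iff_ne_zero.2 ha
      rw [mul_add, mul_one]; omega
    calc a ^ (k + 1) * (k + 1)! = a * (k + 1) * (a ^ k * k !) := by
          rw [pow_succ, factorial_succ]; ring
      _ ∣ a * (k + 1) * (a * (k + 1) - 1)! :=
          mul_dvd_mul_left _ (ih.trans (factorial_dvd_factorial hak))
      _ = (a * (k + 1))! := mul_factorial_pred (by positivity)

section Valuation

variable {p : ℕ} [hp : Fact p.Prime]

theorem padicValNat_le_of_dvd {a b : ℕ} (hb : b ≠ 0) (h : a ∣ b) :
    padicValNat p a ≤ padicValNat p b :=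
  (padicValNat_dvd_iff_le hb).1 (pow_padicValNat_dvd.trans h)

theorem padicValNat_factorial_le_factorial {x y : ℕ} (h : x ≤ y) :
    padicValNat p x ! ≤ padicValNat p y ! :=
  padicValNat_le_of_dvd (factorial_ne_zero y) (factorial_dvd_factorial h)

theorem padicValNat_factorial_add_le (x y : ℕ) :
    padicValNat p x ! + padicValNat p y ! ≤ padicValNat p (x + y)! := by
  rw [← padicValNat.mul (factorial_ne_zero x) (factorial_ne_zero y)]
  exact padicValNat_le_of_dvd (factorial_ne_zero _) (factorial_mul_factorial_dvd_factorial_add x y)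

theorem padicValNat_prod_le_factorial_sum {ι : Type*} (s : Finset ι) {g f : ι → ℕ}
    (hg : ∀ i ∈ s, g i ≠ 0) (h : ∀ i ∈ s, padicValNat p (g i) ≤ padicValNat p (f i)!) :
    padicValNat p (∏ i ∈ s, g i) ≤ padicValNat p (∑ i ∈ s, f i)! := by
  induction s using Finset.cons_induction with
  | empty => simp
  | cons i s hi ih =>
    rw [prod_cons, sum_cons, padicValNat.mul (hg i (mem_cons_self i s))
      (prod_ne_zero_iff.2 fun j hj => hg j (mem_cons_of_mem hj))]
    calc padicValNat p (g i) + padicValNat p (∏ j ∈ s, g j)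
        ≤ padicValNat p (f i)! + padicValNat p (∑ j ∈ s, f j)! :=
          Nat.add_le_add (h i (mem_cons_self i s))
            (ih (fun j hj => hg j (mem_cons_of_mem hj)) fun j hj => h j (mem_cons_of_mem hj))
      _ ≤ padicValNat p (f i + ∑ j ∈ s, f j)! := padicValNat_factorial_add_le _ _

theorem padicValNat_prod_le_factorial_sum_sub {ι : Type*} [DecidableEq ι] {s : Finset ι}
    {g f : ι → ℕ} {i : ι} {c : ℕ} (hi : i ∈ s) (hc : c ≤ f i) (hg : ∀ j ∈ s, g j ≠ 0)
    (hgi : padicValNat p (g i) ≤ padicValNat p (f i - c)!)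
    (h : ∀ j ∈ s, padicValNat p (g j) ≤ padicValNat p (f j)!) :
    padicValNat p (∏ j ∈ s, g j) ≤ padicValNat p (∑ j ∈ s, f j - c)! := by
  rw [← mul_prod_erase s g hi, ← add_sum_erase s f hi, Nat.sub_add_comm hc,
    padicValNat.mul (hg i hi) (prod_ne_zero_iff.2 fun j hj => hg j (mem_of_mem_erase hj))]
  calc padicValNat p (g i) + padicValNat p (∏ j ∈ s.erase i, g j)
      ≤ padicValNat p (f i - c)! + padicValNat p (∑ j ∈ s.erase i, f j)! :=
        Nat.add_le_add hgi (padicValNat_prod_le_factorial_sum _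
          (fun j hj => hg j (mem_of_mem_erase hj)) fun j hj => h j (mem_of_mem_erase hj))
    _ ≤ padicValNat p (f i - c + ∑ j ∈ s.erase i, f j)! := padicValNat_factorial_add_le _ _

theorem three_mul_padicValNat_le (hp2 : p ≠ 2) {n : ℕ} (hn : n ≠ 0) :
    3 * padicValNat p n ≤ n := by
  have hp3 : 3 ≤ p := by have := hp.out.two_le; omega
  calc 3 * padicValNat p n ≤ p * padicValNat p n := Nat.mul_le_mul_right _ hp3
    _ ≤ p ^ padicValNat p n := Nat.mul_le_pow hp.out.one_lt.ne' _
    _ ≤ n := Nat.le_of_dvd (Nat.pos_of_ne_zero hn) pow_padicValNat_dvd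

theorem padicValNat_pow_mul_factorial_le_factorial_sub_two (hp2 : p ≠ 2) {a k : ℕ}
    (ha : 2 ≤ a) (hap : a ≠ p) (hk : k ≠ 0) :
    padicValNat p (a ^ k * k !) ≤ padicValNat p (a * k - 2)! := by
  rw [padicValNat.mul (by positivity) (factorial_ne_zero k), padicValNat.pow]
  by_cases hpa : p ∣ a
  · obtain ⟨b, rfl⟩ := hpa
    have hb : 2 ≤ b := by
      rcases b with _ | _ | b <;> simp_all
    obtain ⟨n, hn⟩ : ∃ n, p * b * k = n + 2 := ⟨p * b * k - 2, by
      have : p * b ≤ p * b * k := Nat.le_mul_of_pos_right _ (Nat.pos_of_ne_zero hk); omega⟩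
    have hpn : p ∣ n + 2 := hn ▸ (dvd_mul_right p b).mul_right k
    have hsucc : padicValNat p (n + 1) = 0 := by
      refine padicValNat.eq_zero_of_not_dvd fun h => hp.out.one_lt.ne' ?_
      exact Nat.dvd_one.1 ((Nat.dvd_add_right h).1 hpn)
    have hfact : padicValNat p (n + 2)! = padicValNat p (n + 2) + padicValNat p n ! := by
      rw [factorial_succ, factorial_succ, ← mul_assoc,
        padicValNat.mul (by positivity) (factorial_ne_zero n),
        padicValNat.mul (by omega) (by omega), hsucc, add_zero]
    have hlegendre : padicValNat p (p * b * k)! = b * k + padicValNat p (b * k)! := by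
      rw [mul_assoc, padicValNat_factorial_mul, add_comm]
    have hinner : k * padicValNat p b + padicValNat p k ! ≤ padicValNat p (b * k)! := by
      rw [← padicValNat.pow, ← padicValNat.mul (by positivity) (factorial_ne_zero k)]
      exact padicValNat_le_of_dvd (factorial_ne_zero _)
        (pow_mul_factorial_dvd_factorial_mul (by omega) k)
    have hval : padicValNat p (p * b * k) = 1 + padicValNat p b + padicValNat p k := by
      rw [padicValNat.mul (by positivity) hk, padicValNat.mul hp.out.ne_zero (by omega),
        padicValNat_self]
    have hvb := three_mul_padicValNat_le hp2 (n := b) (by omega)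
    have hvk := three_mul_padicValNat_le hp2 hk
    have hbk : 2 * k + b ≤ b * k + 2 := by
      have : 1 ≤ k := Nat.one_le_iff_ne_zero.2 hk
      nlinarith
    rw [show p * b * k - 2 = n by omega, padicValNat.mul hp.out.ne_zero (by omega),
      padicValNat_self, mul_add, mul_one]
    rw [hn] at hlegendre hval
    omega
  · rw [padicValNat.eq_zero_of_not_dvd hpa, mul_zero, zero_add]
    rcases Nat.lt_or_ge k 2 with hk1 | hk2
    · obtain rfl : k = 1 := by omega
      simp
    · have : 2 * k ≤ a * k := Nat.mul_le_mul_right k ha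
      exact padicValNat_factorial_le_factorial (by omega)

end Valuation

theorem mul_le_pWeight (U : ℕ →₀ ℕ) (j : ℕ) : j * U j ≤ pWeight U := by
  by_cases hj : j ∈ U.support
  · exact single_le_sum (f := fun j => j * U j) (fun _ _ => Nat.zero_le _) hj
  · rw [Finsupp.notMem_support_iff.1 hj, mul_zero]
    exact Nat.zero_le _

theorem pWeight_add_pDegree (U : ℕ →₀ ℕ) :
    pWeight U + pDegree U = ∑ j ∈ U.support, (j + 1) * U j := by
  rw [pWeight, pDegree, Finsupp.sum, Finsupp.sum, ← sum_add_distrib]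
  exact sum_congr rfl fun j _ => by ring

theorem dvd_pWeight {d : ℕ} {U : ℕ →₀ ℕ} (h : ∀ j ∈ U.support, d ∣ j) : d ∣ pWeight U :=
  dvd_sum fun j hj => (h j hj).mul_right _

theorem finite_setOf_pWeight_eq (n : ℕ) :
    {U : ℕ →₀ ℕ | U 0 = 0 ∧ pWeight U = n}.Finite := by
  refine ((range (n + 1)).finsupp fun _ => range (n + 1)).finite_toSet.subset ?_
  rintro U ⟨h0, rfl⟩
  have hbound : ∀ j ∈ U.support, j ≤ pWeight U ∧ U j ≤ pWeight U := fun j hj => by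
    have hUj : 0 < U j := Nat.pos_of_ne_zero (Finsupp.mem_support_iff.1 hj)
    have hj0 : 0 < j := Nat.pos_of_ne_zero fun h => hUj.ne' (h ▸ h0)
    exact ⟨(Nat.le_mul_of_pos_right j hUj).trans (mul_le_pWeight U j),
      (Nat.le_mul_of_pos_left _ hj0).trans (mul_le_pWeight U j)⟩
  rw [mem_coe, mem_finsupp_iff]
  refine ⟨fun j hj => mem_range_succ_iff.2 (hbound j hj).1, fun j _ => mem_range_succ_iff.2 ?_⟩
  by_cases hj : j ∈ U.support
  · exact (hbound j hj).2
  · rw [Finsupp.notMem_support_iff.1 hj]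
    exact Nat.zero_le _

theorem coeff_Q (n : ℕ) (v : ℕ →₀ ℕ) :
    (Q n).coeff v = if v 0 = 0 ∧ pWeight v = n then pTau v else 0 := by
  classical
  rw [Q, finsum_mem_eq_finite_toFinset_sum _ (finite_setOf_pWeight_eq n), coeff_sum]
  simp only [coeff_monomial, sum_ite_eq', Set.Finite.mem_toFinset, Set.mem_ofPred_eq]

theorem pGamma_ne_zero (U : ℕ →₀ ℕ) : pGamma U ≠ 0 :=
  prod_ne_zero_iff.2 fun j _ => by positivity

theorem padicValRat_pTau {p : ℕ} [Fact p.Prime] (U : ℕ →₀ ℕ) :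
    padicValRat p (pTau U) =
      padicValNat p (pWeight U + pDegree U - 2)! - padicValNat p (pGamma U) := by
  have hγ : (pGamma U : ℚ) ≠ 0 := Nat.cast_ne_zero.2 (pGamma_ne_zero U)
  rw [pTau, padicValRat.div (mul_ne_zero (by simp) (by positivity)) hγ,
    padicValRat.mul (by simp) (by positivity), padicValRat.pow, padicValRat.neg, padicValRat.one,
    mul_zero, zero_add, padicValRat.of_nat, padicValRat.of_nat]

theorem padicValNat_pGamma_le {p : ℕ} [Fact p.Prime] (hp2 : p ≠ 2) {U : ℕ →₀ ℕ} (h0 : U 0 = 0)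
    {j : ℕ} (hj : j ∈ U.support) (hjp : j + 1 ≠ p) :
    padicValNat p (pGamma U) ≤ padicValNat p (pWeight U + pDegree U - 2)! := by
  classical
  have hUj : U j ≠ 0 := Finsupp.mem_support_iff.1 hj
  have hj0 : j ≠ 0 := by rintro rfl; exact hUj h0
  rw [pGamma, Finsupp.prod, pWeight_add_pDegree]
  refine padicValNat_prod_le_factorial_sum_sub hj ?_ (fun i _ => by positivity) ?_ fun i _ => ?_
  · exact Nat.mul_le_mul (by omega : 2 ≤ j + 1) (Nat.one_le_iff_ne_zero.2 hUj)
  · exact padicValNat_pow_mul_factorial_le_factorial_sub_two hp2 (by omega) hjp hUj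
  · exact padicValNat_le_of_dvd (factorial_ne_zero _)
      (pow_mul_factorial_dvd_factorial_mul (succ_ne_zero i) _)

theorem p_integrality_general (p : ℕ) (hp : p.Prime) (hodd : p ≠ 2) (m : ℕ)
    (hmod : ¬ m ≡ 0 [MOD p - 1]) :
    ∀ v : ℕ →₀ ℕ, (Q m).coeff v ≠ 0 → 0 ≤ padicValRat p ((Q m).coeff v) := by
  have := Fact.mk hp
  intro v hv
  rw [coeff_Q] at hv ⊢
  obtain ⟨hv0, rfl⟩ : v 0 = 0 ∧ pWeight v = m := by
    by_contra h
    exact hv (if_neg h)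
  obtain ⟨j, hj, hjp⟩ : ∃ j ∈ v.support, j + 1 ≠ p := by
    by_contra! h
    exact hmod (Nat.modEq_zero_iff_dvd.2 (dvd_pWeight fun j hj => by rw [← h j hj]; simp))
  rw [if_pos ⟨hv0, rfl⟩, padicValRat_pTau, sub_nonneg, Nat.cast_le]
  exact padicValNat_pGamma_le hodd hv0 hj hjp

/-- For an odd prime p and m ≥ 2 with m ≢ 0 mod (p-1), p does not divide the denominator
of B̂_m/m: every nonzero coefficient of Q_m has nonnegative p-adic valuation. -/
theorem p_integrality (p : ℕ) (hp : p.Prime) (hodd : p ≠ 2) (m : ℕ) (hm : 2 ≤ m)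
    (hmod : ¬ m ≡ 0 [MOD p - 1]) :
    ∀ v : ℕ →₀ ℕ, (Q m).coeff v ≠ 0 → 0 ≤ padicValRat p ((Q m).coeff v) :=
  p_integrality_general p hp hodd m hmod

end
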